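/- arXiv:2404.19623 — 3 statements merged into one kernel-verified Lean document; each statement's English description precedes it below -/
import Mathlib

section
/- (Proposition 1) For each player i and each k ∈ ℕ₀, the Δ^κ-rationalization procedure stabilizes for the level-k type after k steps: Σᵗ_{θ_{ik}} = Σᵏ_{θ_{ik}} for every t ≥ k. -/
open scoped BigOperators
open Classical

noncomputable section

/-- A belief of a player: a probability distribution over
(opponent level-type, opponent action) pairs. -/
structure Belief (B : Type*) where
  p : ℕ × B → ℝ
  nonneg : ∀ x, 0 ≤ p x
  hasSum_one : HasSum p 1

/-- Marginal probability assigned to the opponent's level-`t` type. -/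
def Belief.marg {B : Type*} [Fintype B] (μ : Belief B) (t : ℕ) : ℝ := ∑ b : B, μ.p (t, b)

/-- Probability assigned by a belief to a set of (level, action) pairs. -/
def Belief.probOn {B : Type*} (μ : Belief B) (S : Set (ℕ × B)) : ℝ := ∑' x, S.indicator μ.p x

/-- `f` normalized to the levels `0, …, k-1` (denoted `f^k` in the paper). -/
def fnorm (f : ℕ → ℝ) (k t : ℕ) : ℝ := f t / ∑ ℓ ∈ Finset.range k, f ℓ

/-- Membership in `Δ^{θ_{ik}}`: conditions K1–K3 for `k ≥ 1`; no restriction for `k = 0`. -/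
def memDelta {B : Type*} [Fintype B] (f : ℕ → ℝ) (k : ℕ) (μ : Belief B) : Prop :=
  k ≠ 0 →
    ((∀ t, k ≤ t → μ.marg t = 0) ∧
     (0 < μ.marg 0 → ∀ b : B, μ.p (0, b) / μ.marg 0 = 1 / (Fintype.card B : ℝ)) ∧
     (∀ t, t < k → μ.marg t = fnorm f k t))

/-- Expected payoff of own action `a` for the own level-`k` type given belief `μ`:
the level-0 type's payoff is constant `0`, all other types get `v`. -/
def expPay {A B : Type*} (v : A → B → ℝ) (k : ℕ) (μ : Belief B) (a : A) : ℝ :=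
  ∑' x : ℕ × B, μ.p x * (if k = 0 then 0 else v a x.2)

/-- `a` is a best response to belief `μ` under the own level-`k` type. -/
def isBR {A B : Type*} (v : A → B → ℝ) (k : ℕ) (μ : Belief B) (a : A) : Prop :=
  ∀ a' : A, expPay v k μ a' ≤ expPay v k μ a

/-- The Δ^κ-rationalization procedure; component 1 is player 1's set of surviving
(level, action) pairs, component 2 is player 2's. -/
def SigmaProc {A B : Type*} [Fintype A] [Fintype B]
    (v1 : A → B → ℝ) (v2 : B → A → ℝ) (f : ℕ → ℝ) :
    ℕ → Set (ℕ × A) × Set (ℕ × B)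
  | 0 => (Set.univ, Set.univ)
  | n + 1 =>
      let P := SigmaProc v1 v2 f n
      ({x | x ∈ P.1 ∧ ∃ μ : Belief B, memDelta f x.1 μ ∧ μ.probOn P.2 = 1 ∧ isBR v1 x.1 μ x.2},
       {y | y ∈ P.2 ∧ ∃ μ : Belief A, memDelta f y.1 μ ∧ μ.probOn P.1 = 1 ∧ isBR v2 y.1 μ y.2})

/-- The section `Σⁿ_{θ_{1k}}` of player 1 (as a set of actions). -/
def SigmaSec1 {A B : Type*} [Fintype A] [Fintype B]
    (v1 : A → B → ℝ) (v2 : B → A → ℝ) (f : ℕ → ℝ) (n k : ℕ) : Set A :=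
  {a | (k, a) ∈ (SigmaProc v1 v2 f n).1}

/-- The section `Σⁿ_{θ_{2k}}` of player 2 (as a set of actions). -/
def SigmaSec2 {A B : Type*} [Fintype A] [Fintype B]
    (v1 : A → B → ℝ) (v2 : B → A → ℝ) (f : ℕ → ℝ) (n k : ℕ) : Set B :=
  {b | (k, b) ∈ (SigmaProc v1 v2 f n).2}

/-- The CH-procedure requirement on beliefs at step `n+1`, given the previous
sections `Ψⁿ` of the opponent: the support of `μ` equals `∪_{t=0}^{n} Ψⁿ_{θ_{-i,t}}`
and `μ` is conditionally uniform over each `Ψⁿ_{θ_{-i,t}}`. -/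
def CHBelief {B : Type*} (Ψ : ℕ → Set B) (n : ℕ) (μ : Belief B) : Prop :=
  (∀ x : ℕ × B, μ.p x ≠ 0 ↔ x.1 ≤ n ∧ x.2 ∈ Ψ x.1) ∧
  (∀ t, t ≤ n → ∀ b b' : B, b ∈ Ψ t → b' ∈ Ψ t → μ.p (t, b) = μ.p (t, b'))

/-- The CH-procedure: step `n` returns, for each player and each level `k`,
the set of actions in `Ψⁿ_{θ_{ik}}`. -/
def CHProc {A B : Type*} [Fintype A] [Fintype B]
    (v1 : A → B → ℝ) (v2 : B → A → ℝ) (f : ℕ → ℝ) :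
    ℕ → (ℕ → Set A) × (ℕ → Set B)
  | 0 => (fun _ => Set.univ, fun _ => Set.univ)
  | n + 1 =>
      let P := CHProc v1 v2 f n
      (fun k =>
        if k = n + 1 then
          {a | ∃ μ : Belief B, memDelta f (n + 1) μ ∧ CHBelief P.2 n μ ∧ isBR v1 (n + 1) μ a}
        else P.1 k,
       fun k =>
        if k = n + 1 then
          {b | ∃ μ : Belief A, memDelta f (n + 1) μ ∧ CHBelief P.1 n μ ∧ isBR v2 (n + 1) μ b}
        else P.2 k)

/-- `Ψⁿ_{θ_{1k}}` for player 1 (as a set of actions). -/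
def CHSec1 {A B : Type*} [Fintype A] [Fintype B]
    (v1 : A → B → ℝ) (v2 : B → A → ℝ) (f : ℕ → ℝ) (n k : ℕ) : Set A :=
  (CHProc v1 v2 f n).1 k

/-- `Ψⁿ_{θ_{2k}}` for player 2 (as a set of actions). -/
def CHSec2 {A B : Type*} [Fintype A] [Fintype B]
    (v1 : A → B → ℝ) (v2 : B → A → ℝ) (f : ℕ → ℝ) (n k : ℕ) : Set B :=
  (CHProc v1 v2 f n).2 k

end

/-!
A level-`k` belief puts no weight on opponent levels `≥ k`, so whether it is concentrated on
`Σⁿ₋ᵢ` depends only on the opponent's sections at levels `< k`. By strong induction on `k`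
these sections no longer change after step `k - 1`, hence the beliefs justifying an action of
the level-`k` type at step `k` still justify it at every later step; since the procedure is
decreasing, `Σᵗ_{θ_{ik}} = Σᵏ_{θ_{ik}}` for `t ≥ k`. The level-`0` type is indifferent among
all actions and keeps all of them.
-/

noncomputable section

namespace Belief

variable {B : Type*}

def dirac (x : ℕ × B) : Belief B where
  p := Pi.single x 1
  nonneg y := by rw [Pi.single_apply]; split_ifs <;> norm_num
  hasSum_one := hasSum_pi_single x 1

theorem probOn_dirac {x : ℕ × B} {S : Set (ℕ × B)} (hx : x ∈ S) : (dirac x).probOn S = 1 := by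
  have : S.indicator (dirac x).p = (dirac x).p := by
    ext y
    by_cases hy : y = x
    · subst hy; exact Set.indicator_of_mem hx _
    · simp [dirac, Set.indicator_apply, hy]
  rw [probOn, this]
  exact (dirac x).hasSum_one.tsum_eq

theorem probOn_congr {μ : Belief B} {k : ℕ} (hμ : ∀ t, k ≤ t → ∀ b, μ.p (t, b) = 0)
    {S S' : Set (ℕ × B)} (hSS' : ∀ t < k, ∀ b, (t, b) ∈ S ↔ (t, b) ∈ S') :
    μ.probOn S = μ.probOn S' := by
  refine tsum_congr fun ⟨t, b⟩ => ?_
  rcases lt_or_ge t k with ht | ht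
  · simp only [Set.indicator_apply, hSS' t ht b]
  · simp [Set.indicator_apply, hμ t ht b]

end Belief

theorem memDelta_zero {B : Type*} [Fintype B] (f : ℕ → ℝ) (μ : Belief B) : memDelta f 0 μ :=
  fun h => absurd rfl h

theorem memDelta.p_eq_zero {B : Type*} [Fintype B] {f : ℕ → ℝ} {k : ℕ} {μ : Belief B}
    (h : memDelta f k μ) (hk : k ≠ 0) {t : ℕ} (ht : k ≤ t) (b : B) : μ.p (t, b) = 0 :=
  (Finset.sum_eq_zero_iff_of_nonneg fun b _ => μ.nonneg (t, b)).mp ((h hk).1 t ht) b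
    (Finset.mem_univ b)

theorem isBR_zero {A B : Type*} (v : A → B → ℝ) (μ : Belief B) (a : A) : isBR v 0 μ a := by
  simp [isBR, expPay]

section SigmaProc

variable {A B : Type*} [Fintype A] [Fintype B] (v1 : A → B → ℝ) (v2 : B → A → ℝ) (f : ℕ → ℝ)

theorem sigmaProc_swap (n : ℕ) : SigmaProc v2 v1 f n = (SigmaProc v1 v2 f n).swap := by
  induction n with
  | zero => rfl
  | succ n ih => simp only [SigmaProc, ih, Prod.fst_swap, Prod.snd_swap, Prod.swap_prod_mk]

theorem sigmaSec2_eq_sigmaSec1_swap (n k : ℕ) :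
    SigmaSec2 v1 v2 f n k = SigmaSec1 v2 v1 f n k := by
  simp only [SigmaSec1, SigmaSec2, sigmaProc_swap v1 v2, Prod.fst_swap]

theorem sigmaProc_fst_antitone : Antitone fun n => (SigmaProc v1 v2 f n).1 :=
  antitone_nat_of_succ_le fun _ _ hx => hx.1

theorem sigmaSec_level_zero [Nonempty A] [Nonempty B] (n : ℕ) :
    SigmaSec1 v1 v2 f n 0 = Set.univ ∧ SigmaSec2 v1 v2 f n 0 = Set.univ := by
  simp only [SigmaSec1, SigmaSec2, Set.eq_univ_iff_forall, Set.mem_ofPred_eq]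
  induction n with
  | zero => exact ⟨fun _ => trivial, fun _ => trivial⟩
  | succ n ih =>
    refine ⟨fun a => ⟨ih.1 a, ?_⟩, fun b => ⟨ih.2 b, ?_⟩⟩
    · exact ⟨.dirac (0, Classical.arbitrary B), memDelta_zero f _,
        Belief.probOn_dirac (ih.2 _), isBR_zero v1 _ a⟩
    · exact ⟨.dirac (0, Classical.arbitrary A), memDelta_zero f _,
        Belief.probOn_dirac (ih.1 _), isBR_zero v2 _ b⟩

theorem sigmaSec1_succ_eq {m n : ℕ} (hmn : m < n)
    (hlow : ∀ j ≤ m, SigmaSec2 v1 v2 f n j = SigmaSec2 v1 v2 f m j) :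
    SigmaSec1 v1 v2 f (n + 1) (m + 1) = SigmaSec1 v1 v2 f n (m + 1) := by
  refine Set.Subset.antisymm (fun a ha => ha.1) fun a ha => ⟨ha, ?_⟩
  obtain ⟨-, μ, hμ, hμS, hbr⟩ := sigmaProc_fst_antitone v1 v2 f hmn ha
  refine ⟨μ, hμ, ?_, hbr⟩
  rw [Belief.probOn_congr (fun t ht => hμ.p_eq_zero m.succ_ne_zero ht), hμS]
  intro j hj b
  exact Set.ext_iff.mp (hlow j (Nat.lt_succ_iff.mp hj)) b

theorem sigmaSec2_succ_eq {m n : ℕ} (hmn : m < n)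
    (hlow : ∀ j ≤ m, SigmaSec1 v1 v2 f n j = SigmaSec1 v1 v2 f m j) :
    SigmaSec2 v1 v2 f (n + 1) (m + 1) = SigmaSec2 v1 v2 f n (m + 1) := by
  simp only [sigmaSec2_eq_sigmaSec1_swap] at hlow ⊢
  refine sigmaSec1_succ_eq v2 v1 f hmn fun j hj => ?_
  simpa only [← sigmaSec2_eq_sigmaSec1_swap] using hlow j hj

end SigmaProc

end

theorem sigma_stabilizes_at_level_general {A B : Type*} [Fintype A] [Fintype B] [Nonempty A] [Nonempty B]
    (v1 : A → B → ℝ) (v2 : B → A → ℝ)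
    (f : ℕ → ℝ) :
    ∀ k t : ℕ, k ≤ t →
      SigmaSec1 v1 v2 f t k = SigmaSec1 v1 v2 f k k ∧
      SigmaSec2 v1 v2 f t k = SigmaSec2 v1 v2 f k k := by
  intro k
  induction k using Nat.strong_induction_on with
  | _ k ih =>
    cases k with
    | zero =>
      intro t _
      simp only [sigmaSec_level_zero v1 v2 f, and_self]
    | succ m =>
      intro t hmt
      induction t, hmt using Nat.le_induction with
      | base => exact ⟨rfl, rfl⟩
      | succ n hmn ihn =>
        have at_n (j : ℕ) (hj : j ≤ m) := ih j (by omega) n (by omega)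
        have at_m (j : ℕ) (hj : j ≤ m) := ih j (by omega) m hj
        exact ⟨(sigmaSec1_succ_eq v1 v2 f hmn fun j hj =>
            (at_n j hj).2.trans (at_m j hj).2.symm).trans ihn.1,
          (sigmaSec2_succ_eq v1 v2 f hmn fun j hj =>
            (at_n j hj).1.trans (at_m j hj).1.symm).trans ihn.2⟩

/-- Proposition 1: the Δ^κ-rationalization procedure stabilizes for the
level-k type after k steps, for each player. -/
theorem sigma_stabilizes_at_level {A B : Type*} [Fintype A] [Fintype B] [Nonempty A] [Nonempty B]
    (v1 : A → B → ℝ) (v2 : B → A → ℝ)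
    (f : ℕ → ℝ) (hf : ∀ n, 0 < f n) (hfsum : HasSum f 1) :
    ∀ k t : ℕ, k ≤ t →
      SigmaSec1 v1 v2 f t k = SigmaSec1 v1 v2 f k k ∧
      SigmaSec2 v1 v2 f t k = SigmaSec2 v1 v2 f k k :=
  sigma_stabilizes_at_level_general v1 v2 f
end

section
/- For every player i, every level k ∈ ℕ₀ and every round n ∈ ℕ₀, the survivor set Ψⁿ_{θ_{ik}} of the CH-procedure is nonempty. -/
open scoped BigOperators
open Classical

lemma chproc_zero_univ {A B : Type*} [Fintype A] [Fintype B]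
    (v1 : A → B → ℝ) (v2 : B → A → ℝ) (f : ℕ → ℝ) :
    ∀ n, (CHProc v1 v2 f n).1 0 = Set.univ ∧ (CHProc v1 v2 f n).2 0 = Set.univ := by
  intro n
  induction n with
  | zero => exact ⟨rfl, rfl⟩
  | succ n ih =>
    have h0 : (0 : ℕ) ≠ n + 1 := by omega
    constructor
    · simp only [CHProc]
      rw [if_neg h0]; exact ih.1
    · simp only [CHProc]
      rw [if_neg h0]; exact ih.2

lemma exists_chbelief {B : Type*} [Fintype B] [Nonempty B]
    (f : ℕ → ℝ) (hf : ∀ n, 0 < f n) (n : ℕ)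
    (S : ℕ → Set B) (hS : ∀ t, (S t).Nonempty) (hS0 : S 0 = Set.univ) :
    ∃ μ : Belief B, memDelta f (n + 1) μ ∧ CHBelief S n μ := by
  classical
  set D : ℝ := ∑ ℓ ∈ Finset.range (n + 1), f ℓ with hD
  have hDpos : 0 < D := Finset.sum_pos (fun i _ => hf i) (by simp)
  set m : ℕ → ℕ := fun t => (Finset.univ.filter (· ∈ S t)).card with hm
  have hmpos : ∀ t, 0 < m t := by
    intro t
    obtain ⟨b, hb⟩ := hS t
    exact Finset.card_pos.2 ⟨b, by simp [hb]⟩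
  set p : ℕ × B → ℝ :=
    fun x => if x.1 ≤ n ∧ x.2 ∈ S x.1 then fnorm f (n + 1) x.1 / (m x.1) else 0 with hp
  have hfnpos : ∀ t, 0 < fnorm f (n + 1) t := fun t => div_pos (hf t) hDpos
  have hpos : ∀ x : ℕ × B, x.1 ≤ n → x.2 ∈ S x.1 → 0 < p x := by
    intro x ht hb
    have hx : x.1 ≤ n ∧ x.2 ∈ S x.1 := ⟨ht, hb⟩
    simp only [hp]
    rw [if_pos hx]
    exact div_pos (hfnpos x.1) (Nat.cast_pos.mpr (hmpos x.1))
  have hnonneg : ∀ x, 0 ≤ p x := by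
    intro x
    by_cases h : x.1 ≤ n ∧ x.2 ∈ S x.1
    · exact (hpos x h.1 h.2).le
    · simp only [hp, if_neg h]; exact le_rfl
  have hrow : ∀ t, (∑ b : B, p (t, b)) = if t ≤ n then fnorm f (n + 1) t else 0 := by
    intro t
    by_cases ht : t ≤ n
    · rw [if_pos ht]
      have h1 : (∑ b : B, p (t, b))
          = ∑ b ∈ Finset.univ.filter (· ∈ S t), fnorm f (n + 1) t / m t := by
        rw [Finset.sum_filter]
        apply Finset.sum_congr rfl
        intro b _
        by_cases hb : b ∈ S t <;> simp [hp, ht, hb]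
      rw [h1, Finset.sum_const, nsmul_eq_mul]
      have h2 : ((Finset.univ.filter (· ∈ S t)).card : ℝ) = (m t : ℝ) := by rw [hm]
      rw [h2, mul_div_cancel₀]
      exact_mod_cast (hmpos t).ne'
    · rw [if_neg ht]
      apply Finset.sum_eq_zero
      intro b _
      simp [hp, ht]
  have hsupp : ∀ x ∉ (Finset.range (n + 1) ×ˢ (Finset.univ : Finset B)), p x = 0 := by
    intro x hx
    simp only [Finset.mem_product, Finset.mem_range, Finset.mem_univ, and_true] at hx
    have hxn : ¬ x.1 ≤ n := by omega
    simp [hp, hxn]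
  have hsum : HasSum p (∑ x ∈ Finset.range (n + 1) ×ˢ Finset.univ, p x) :=
    hasSum_sum_of_ne_finset_zero hsupp
  have hsumval : (∑ x ∈ Finset.range (n + 1) ×ˢ (Finset.univ : Finset B), p x) = 1 := by
    rw [Finset.sum_product]
    have h3 : ∀ t ∈ Finset.range (n + 1), (∑ b : B, p (t, b)) = f t / D := by
      intro t ht
      rw [hrow t, if_pos (by simpa [Nat.lt_succ_iff] using Finset.mem_range.1 ht)]
      rfl
    rw [Finset.sum_congr rfl h3, ← Finset.sum_div]
    exact div_self hDpos.ne'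
  refine ⟨⟨p, hnonneg, hsumval ▸ hsum⟩, ?_, ?_, ?_⟩
  · -- memDelta
    intro _
    refine ⟨?_, ?_, ?_⟩
    · intro t ht
      show (∑ b : B, p (t, b)) = 0
      rw [hrow t, if_neg (by omega)]
    · intro _ b
      have hmarg0 : (∑ b : B, p (0, b)) = fnorm f (n + 1) 0 := by
        rw [hrow 0, if_pos (Nat.zero_le n)]
      have hb0 : b ∈ S 0 := hS0 ▸ Set.mem_univ b
      have hm0 : m 0 = Fintype.card B := by
        simp [hm, Finset.filter_true_of_mem fun x _ => hS0 ▸ Set.mem_univ x]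
      have hx : (0:ℕ) ≤ n ∧ b ∈ S 0 := ⟨Nat.zero_le n, hb0⟩
      have hp0 : p (0, b) = fnorm f (n + 1) 0 / Fintype.card B := by
        simp only [hp]
        rw [if_pos hx, hm0]
      show p (0, b) / (∑ b : B, p (0, b)) = 1 / (Fintype.card B : ℝ)
      rw [hp0, hmarg0, div_right_comm, div_self (hfnpos 0).ne']
    · intro t ht
      show (∑ b : B, p (t, b)) = fnorm f (n + 1) t
      rw [hrow t, if_pos (by omega)]
  · -- support condition
    intro x
    constructor
    · intro hne
      by_contra h
      exact hne (by simp [hp, h])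
    · intro h
      exact (hpos x h.1 h.2).ne'
  · -- conditional uniformity
    intro t ht b b' hb hb'
    have hx : t ≤ n ∧ b ∈ S t := ⟨ht, hb⟩
    have hx' : t ≤ n ∧ b' ∈ S t := ⟨ht, hb'⟩
    show p (t, b) = p (t, b')
    simp only [hp]
    rw [if_pos hx, if_pos hx']

/-- all survivor sets of the CH-procedure are nonempty. -/
theorem ch_sections_nonempty {A B : Type*} [Fintype A] [Fintype B] [Nonempty A] [Nonempty B]
    (v1 : A → B → ℝ) (v2 : B → A → ℝ)
    (f : ℕ → ℝ) (hf : ∀ n, 0 < f n) (hfsum : HasSum f 1) :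
    ∀ n k : ℕ, (CHSec1 v1 v2 f n k).Nonempty ∧ (CHSec2 v1 v2 f n k).Nonempty := by
  intro n
  induction n with
  | zero =>
    intro k
    exact ⟨Set.univ_nonempty, Set.univ_nonempty⟩
  | succ n ih =>
    intro k
    by_cases hk : k = n + 1
    · subst hk
      obtain ⟨μ1, hμ1d, hμ1c⟩ :=
        exists_chbelief f hf n ((CHProc v1 v2 f n).2) (fun t => (ih t).2)
          (chproc_zero_univ v1 v2 f n).2
      obtain ⟨a, ha⟩ := Finite.exists_max (expPay v1 (n + 1) μ1)
      obtain ⟨μ2, hμ2d, hμ2c⟩ :=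
        exists_chbelief f hf n ((CHProc v1 v2 f n).1) (fun t => (ih t).1)
          (chproc_zero_univ v1 v2 f n).1
      obtain ⟨b, hb⟩ := Finite.exists_max (expPay v2 (n + 1) μ2)
      constructor
      · refine ⟨a, ?_⟩
        show a ∈ (if n + 1 = n + 1 then
            {a | ∃ μ : Belief B, memDelta f (n + 1) μ ∧
              CHBelief (CHProc v1 v2 f n).2 n μ ∧ isBR v1 (n + 1) μ a}
          else (CHProc v1 v2 f n).1 (n + 1))
        rw [if_pos rfl]
        exact ⟨μ1, hμ1d, hμ1c, fun a' => ha a'⟩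
      · refine ⟨b, ?_⟩
        show b ∈ (if n + 1 = n + 1 then
            {b | ∃ μ : Belief A, memDelta f (n + 1) μ ∧
              CHBelief (CHProc v1 v2 f n).1 n μ ∧ isBR v2 (n + 1) μ b}
          else (CHProc v1 v2 f n).2 (n + 1))
        rw [if_pos rfl]
        exact ⟨μ2, hμ2d, hμ2c, fun b' => hb b'⟩
    · have e1 : CHSec1 v1 v2 f (n + 1) k = CHSec1 v1 v2 f n k := by
        show (if k = n + 1 then _ else (CHProc v1 v2 f n).1 k) = _
        rw [if_neg hk]; rfl
      have e2 : CHSec2 v1 v2 f (n + 1) k = CHSec2 v1 v2 f n k := by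
        show (if k = n + 1 then _ else (CHProc v1 v2 f n).2 k) = _
        rw [if_neg hk]; rfl
      rw [e1, e2]
      exact ih k
end

section
/- (Density of generic games) For every pair of payoff functions (v₁, v₂) on A₁ × A₂ and every ε > 0, there exist payoff functions (v′₁, v′₂) with ∑_{i=1,2} ∑_{a ∈ A₁ × A₂} |v_i(a) − v′_i(a)| < ε such that in the game with payoffs (v′₁, v′₂), for every player i and every k ≥ 1, the survivor set Σᵏ_{θ_{ik}} of the Δ^κ-rationalization procedure is a singleton; consequently, in the perturbed game, Ψᵏ_{θ_{ik}} = Σᵏ_{θ_{ik}} for every i and k. -/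
open scoped BigOperators
open Classical

/-!
Perturb player 1's payoffs to `v₁ a b + δ r a` and player 2's to `v₂ b a + δ q b` with `r`, `q`
injective. If a level-`k` belief puts all the mass of each level `0 < s < k` on one action `β s`,
then K1–K3 determine it completely, so the expected payoff is `canonicalPayoff w f k β`, which the
perturbation shifts by `δ • r`. For each `k` there are only finitely many such payoff functions,
so for all but countably many `δ` every one of them is injective and best replies are unique.
By induction on the step, both procedures then pin the level-`k` types down to the same path of
unique best replies `α k`, `β k`: in the Δ^κ-procedure from step `k` on, and in the CH-procedure,
whose belief at step `k` must be the canonical one along the singletons of the earlier levels.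
-/

open Finset Function

section

variable {A B : Type*}

namespace Belief

theorem probOn_eq_one_of_support (μ : Belief B) {S : Set (ℕ × B)}
    (h : ∀ x, μ.p x ≠ 0 → x ∈ S) : μ.probOn S = 1 := by
  rw [probOn, Set.indicator_eq_self.2 fun x hx => h x hx, μ.hasSum_one.tsum_eq]

theorem p_eq_zero_of_probOn_eq_one (μ : Belief B) {S : Set (ℕ × B)} (h : μ.probOn S = 1)
    {x : ℕ × B} (hx : x ∉ S) : μ.p x = 0 := by
  by_contra hne
  have hlt : S.indicator μ.p x < μ.p x := by
    rw [Set.indicator_of_notMem hx]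
    exact (μ.nonneg x).lt_of_ne (Ne.symm hne)
  have hsum := μ.hasSum_one.summable
  have := Summable.tsum_lt_tsum (Set.indicator_le_self' fun y _ => μ.nonneg y) hlt
    (hsum.indicator S) hsum
  rw [μ.hasSum_one.tsum_eq] at this
  exact this.ne h

theorem p_eq_zero_of_marg_eq_zero [Fintype B] (μ : Belief B) {t : ℕ} (h : μ.marg t = 0)
    (b : B) : μ.p (t, b) = 0 :=
  (sum_eq_zero_iff_of_nonneg fun _ _ => μ.nonneg _).1 h b (mem_univ b)

theorem p_eq_marg_of_forall_ne [Fintype B] (μ : Belief B) {t : ℕ} {b₀ : B}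
    (h : ∀ b, b ≠ b₀ → μ.p (t, b) = 0) : μ.p (t, b₀) = μ.marg t :=
  (sum_eq_single b₀ (fun b _ hb => h b hb) (by simp)).symm

end Belief

theorem fnorm_nonneg {f : ℕ → ℝ} (hf : ∀ n, 0 < f n) (k t : ℕ) : 0 ≤ fnorm f k t :=
  div_nonneg (hf t).le (sum_nonneg fun i _ => (hf i).le)

theorem fnorm_pos {f : ℕ → ℝ} (hf : ∀ n, 0 < f n) {k : ℕ} (hk : k ≠ 0) (t : ℕ) :
    0 < fnorm f k t :=
  div_pos (hf t) (sum_pos (fun i _ => hf i) (nonempty_range_iff.2 hk))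

theorem sum_fnorm {f : ℕ → ℝ} (hf : ∀ n, 0 < f n) {k : ℕ} (hk : k ≠ 0) :
    ∑ s ∈ range k, fnorm f k s = 1 := by
  unfold fnorm
  rw [← sum_div, div_self (sum_pos (fun i _ => hf i) (nonempty_range_iff.2 hk)).ne']

section Canonical

variable [Fintype B] {f : ℕ → ℝ} {k : ℕ}

noncomputable def canonicalWeight (f : ℕ → ℝ) (k : ℕ) (β : ℕ → B) (x : ℕ × B) : ℝ :=
  if x.1 = 0 then fnorm f k 0 / Fintype.card B
  else if x.1 < k ∧ x.2 = β x.1 then fnorm f k x.1 else 0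

theorem canonicalWeight_nonneg (hf : ∀ n, 0 < f n) (β : ℕ → B) (x : ℕ × B) :
    0 ≤ canonicalWeight f k β x := by
  unfold canonicalWeight
  split_ifs
  · exact div_nonneg (fnorm_nonneg hf k 0) (Nat.cast_nonneg _)
  · exact fnorm_nonneg hf k _
  · exact le_rfl

theorem memDelta.p_eq_zero_of_le {μ : Belief B} (hμ : memDelta f k μ) (hk : k ≠ 0) {s : ℕ}
    (hs : k ≤ s) (b : B) : μ.p (s, b) = 0 :=
  μ.p_eq_zero_of_marg_eq_zero ((hμ hk).1 s hs) b

/-- The expected payoff against `canonicalBelief hf hk β`, as a finite sum over levels. -/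
noncomputable def canonicalPayoff (w : A → B → ℝ) (f : ℕ → ℝ) (k : ℕ) (β : ℕ → B) (a : A) : ℝ :=
  ∑ s ∈ range k, fnorm f k s * (if s = 0 then (∑ b, w a b) / Fintype.card B else w a (β s))

theorem canonicalPayoff_congr (w : A → B → ℝ) (f : ℕ → ℝ) (k : ℕ) {β β' : ℕ → B}
    (h : ∀ s < k, β s = β' s) : canonicalPayoff w f k β = canonicalPayoff w f k β' := by
  funext a
  exact sum_congr rfl fun s hs => by rw [h s (mem_range.1 hs)]

variable [Nonempty B]

theorem canonicalWeight_ne_zero_iff (hf : ∀ n, 0 < f n) (hk : k ≠ 0)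
    (β : ℕ → B) (x : ℕ × B) :
    canonicalWeight f k β x ≠ 0 ↔ x.1 < k ∧ (x.1 = 0 ∨ x.2 = β x.1) := by
  have := fnorm_pos hf hk
  unfold canonicalWeight
  split_ifs <;> simp_all [(this _).ne', Nat.pos_of_ne_zero hk]

theorem sum_canonicalWeight (β : ℕ → B) {s : ℕ} (hs : s < k) :
    ∑ b, canonicalWeight f k β (s, b) = fnorm f k s := by
  rcases eq_or_ne s 0 with rfl | hs0
  · simp [canonicalWeight]
    field_simp
  · simp [canonicalWeight, hs0, hs]

/-- The belief of a level-`k` type in which level-`0` opponents play uniformly and level-`s`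
opponents (`0 < s < k`) play `β s`. -/
noncomputable def canonicalBelief (hf : ∀ n, 0 < f n) (hk : k ≠ 0) (β : ℕ → B) : Belief B where
  p := canonicalWeight f k β
  nonneg := canonicalWeight_nonneg hf β
  hasSum_one := by
    have hvanish : ∀ x ∉ range k ×ˢ univ, canonicalWeight f k β x = 0 := fun x hx =>
      not_not.1 fun h => hx (by simpa using ((canonicalWeight_ne_zero_iff hf hk β x).1 h).1)
    have : HasSum (canonicalWeight f k β) _ := hasSum_sum_of_ne_finset_zero hvanish
    rwa [sum_product, sum_congr rfl fun s hs => sum_canonicalWeight β (mem_range.1 hs),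
      sum_fnorm hf hk] at this

theorem canonicalBelief_memDelta (hf : ∀ n, 0 < f n) (hk : k ≠ 0) (β : ℕ → B) :
    memDelta f k (canonicalBelief hf hk β) := by
  intro _
  have hmarg : ∀ t < k, (canonicalBelief hf hk β).marg t = fnorm f k t :=
    fun t ht => sum_canonicalWeight β ht
  refine ⟨fun t ht => ?_, fun _ b => ?_, hmarg⟩
  · refine sum_eq_zero fun b _ => not_not.1 fun h => ?_
    exact absurd ((canonicalWeight_ne_zero_iff hf hk β (t, b)).1 h).1 (not_lt.2 ht)
  · rw [hmarg 0 (Nat.pos_of_ne_zero hk)]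
    change fnorm f k 0 / Fintype.card B / fnorm f k 0 = _
    rw [div_right_comm, div_self (fnorm_pos hf hk 0).ne']

theorem memDelta.p_zero (hf : ∀ n, 0 < f n) {μ : Belief B} (hμ : memDelta f k μ)
    (hk : k ≠ 0) (b : B) : μ.p (0, b) = fnorm f k 0 / Fintype.card B := by
  obtain ⟨-, huniform, hmarg⟩ := hμ hk
  have hm : μ.marg 0 = fnorm f k 0 := hmarg 0 (Nat.pos_of_ne_zero hk)
  have h := huniform (hm ▸ fnorm_pos hf hk 0) b
  have hN : (Fintype.card B : ℝ) ≠ 0 := by positivity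
  rw [hm, div_eq_div_iff (fnorm_pos hf hk 0).ne' hN] at h
  rw [eq_div_iff hN]
  linarith

theorem expPay_eq_canonicalPayoff (hf : ∀ n, 0 < f n) (hk : k ≠ 0)
    {μ : Belief B} (hμ : memDelta f k μ) {β : ℕ → B}
    (hβ : ∀ s b, s ≠ 0 → s < k → b ≠ β s → μ.p (s, b) = 0) (w : A → B → ℝ) (a : A) :
    expPay w k μ a = canonicalPayoff w f k β a := by
  have hlevel : ∀ s ∈ range k, ∑ b, μ.p (s, b) * w a b =
      fnorm f k s * (if s = 0 then (∑ b, w a b) / Fintype.card B else w a (β s)) := by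
    intro s hs
    have hsk := mem_range.1 hs
    rcases eq_or_ne s 0 with rfl | hs0
    · simp only [hμ.p_zero hf hk, if_pos, ← mul_sum]
      ring
    · rw [sum_eq_single (β s) (fun b _ hb => by rw [hβ s b hs0 hsk hb, zero_mul]) (by simp),
        μ.p_eq_marg_of_forall_ne (hβ s · hs0 hsk), (hμ hk).2.2 s hsk, if_neg hs0]
  have hvanish : ∀ x ∉ range k ×ˢ univ, μ.p x * w a x.2 = 0 := fun x hx => by
    rw [hμ.p_eq_zero_of_le hk (not_lt.1 fun h => hx (by simpa using h)), zero_mul]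
  simp only [expPay, if_neg hk]
  rw [tsum_eq_sum hvanish, sum_product, sum_congr rfl hlevel, canonicalPayoff]

theorem expPay_canonicalBelief (hf : ∀ n, 0 < f n) (hk : k ≠ 0) (β : ℕ → B)
    (w : A → B → ℝ) (a : A) :
    expPay w k (canonicalBelief hf hk β) a = canonicalPayoff w f k β a := by
  refine expPay_eq_canonicalPayoff hf hk (canonicalBelief_memDelta hf hk β)
    (fun s b _ _ hb => not_not.1 fun h => hb ?_) w a
  obtain ⟨-, h0 | hβ⟩ := (canonicalWeight_ne_zero_iff hf hk β (s, b)).1 h <;> simp_all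

end Canonical

section Procedures

variable [Fintype B] [Nonempty B]

def IsStrictBestReplyPath (w : A → B → ℝ) (f : ℕ → ℝ) (β : ℕ → B) (α : ℕ → A) : Prop :=
  ∀ k, k ≠ 0 → ∀ a, a ≠ α k → canonicalPayoff w f k β a < canonicalPayoff w f k β (α k)

variable {f : ℕ → ℝ}

namespace IsStrictBestReplyPath

variable {w : A → B → ℝ} {β : ℕ → B} {α : ℕ → A}

theorem isBR_canonicalBelief (h : IsStrictBestReplyPath w f β α) (hf : ∀ n, 0 < f n) {k : ℕ}
    (hk : k ≠ 0) : isBR w k (canonicalBelief hf hk β) (α k) := fun a => by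
  rw [expPay_canonicalBelief, expPay_canonicalBelief]
  rcases eq_or_ne a (α k) with rfl | ha
  · exact le_rfl
  · exact (h k hk a ha).le

theorem eq_of_isBR (h : IsStrictBestReplyPath w f β α) (hf : ∀ n, 0 < f n) {k : ℕ} (hk : k ≠ 0)
    {μ : Belief B} (hμ : memDelta f k μ)
    (hβ : ∀ s b, s ≠ 0 → s < k → b ≠ β s → μ.p (s, b) = 0) {a : A} (ha : isBR w k μ a) :
    a = α k := by
  by_contra hne
  have := ha (α k)
  rw [expPay_eq_canonicalPayoff hf hk hμ hβ, expPay_eq_canonicalPayoff hf hk hμ hβ] at this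
  exact (h k hk a hne).not_ge this

end IsStrictBestReplyPath

structure SurvivorsAlong (S : Set (ℕ × A)) (α : ℕ → A) (n : ℕ) : Prop where
  level_zero : ∀ a, (0, a) ∈ S
  mem_path : ∀ t, (t, α t) ∈ S
  eq_path : ∀ t a, t ≠ 0 → t ≤ n → (t, a) ∈ S → a = α t

namespace SurvivorsAlong

theorem probOn_canonicalBelief {T : Set (ℕ × B)} {β : ℕ → B} {n : ℕ}
    (hT : SurvivorsAlong T β n) (hf : ∀ n, 0 < f n) {k : ℕ} (hk : k ≠ 0) :
    (canonicalBelief hf hk β).probOn T = 1 := by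
  refine Belief.probOn_eq_one_of_support _ fun ⟨s, b⟩ hx => ?_
  obtain ⟨-, h0 | hb⟩ := (canonicalWeight_ne_zero_iff hf hk β (s, b)).1 hx
  · exact (show s = 0 from h0) ▸ hT.level_zero b
  · exact (show b = β s from hb) ▸ hT.mem_path s

theorem step {w : A → B → ℝ} {S : Set (ℕ × A)} {T : Set (ℕ × B)} {α : ℕ → A} {β : ℕ → B}
    {n : ℕ} (hS : SurvivorsAlong S α n) (hT : SurvivorsAlong T β n)
    (hα : IsStrictBestReplyPath w f β α) (hf : ∀ n, 0 < f n) :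
    SurvivorsAlong {x | x ∈ S ∧ ∃ μ : Belief B, memDelta f x.1 μ ∧ μ.probOn T = 1 ∧
      isBR w x.1 μ x.2} α (n + 1) := by
  -- the level-`0` type is indifferent, so any belief supported on `T` will do
  have level_zero : ∀ a, ((0 : ℕ), a) ∈ {x | x ∈ S ∧ ∃ μ : Belief B, memDelta f x.1 μ ∧
      μ.probOn T = 1 ∧ isBR w x.1 μ x.2} := fun a =>
    ⟨hS.level_zero a, canonicalBelief hf one_ne_zero β, fun h => absurd rfl h,
      hT.probOn_canonicalBelief hf one_ne_zero, fun _ => by simp [expPay]⟩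
  refine ⟨level_zero, fun t => ?_, ?_⟩
  · rcases eq_or_ne t 0 with rfl | ht
    · exact level_zero _
    · exact ⟨hS.mem_path t, canonicalBelief hf ht β, canonicalBelief_memDelta hf ht β,
        hT.probOn_canonicalBelief hf ht, hα.isBR_canonicalBelief hf ht⟩
  · rintro t a ht htn ⟨-, μ, hμ, hprob, hbr⟩
    refine hα.eq_of_isBR hf ht hμ (fun s b hs hst hb => ?_) hbr
    by_contra hne
    have hmem : (s, b) ∈ T :=
      by_contra fun hnotT => hne (μ.p_eq_zero_of_probOn_eq_one hprob hnotT)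
    exact hb (hT.eq_path s b hs (by omega) hmem)

end SurvivorsAlong

def pathSections (α : ℕ → A) (n k : ℕ) : Set A :=
  if k ≠ 0 ∧ k ≤ n then {α k} else Set.univ

theorem pathSections_self (α : ℕ → A) {k : ℕ} (hk : k ≠ 0) : pathSections α k k = {α k} :=
  if_pos ⟨hk, le_rfl⟩

theorem pathSections_succ (α : ℕ → A) (n k : ℕ) :
    pathSections α (n + 1) k = if k = n + 1 then {α (n + 1)} else pathSections α n k := by
  rcases eq_or_ne k (n + 1) with rfl | hk
  · simp [pathSections]
  · simp only [pathSections, if_neg hk]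
    exact if_congr (by omega) rfl rfl

theorem SurvivorsAlong.setOf_eq_pathSections {S : Set (ℕ × A)} {α : ℕ → A} {n t : ℕ}
    (h : SurvivorsAlong S α n) (htn : t ≤ n) : {a | (t, a) ∈ S} = pathSections α n t := by
  unfold pathSections
  split_ifs with ht
  · exact Set.ext fun a => ⟨h.eq_path t a ht.1 htn, by rintro rfl; exact h.mem_path t⟩
  · obtain rfl : t = 0 := by omega
    exact Set.eq_univ_of_forall h.level_zero

theorem chBelief_canonicalBelief (hf : ∀ n, 0 < f n) (β : ℕ → B) (n : ℕ) :
    CHBelief (pathSections β n) n (canonicalBelief hf n.succ_ne_zero β) := by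
  refine ⟨fun x => ?_, fun t htn b b' hb hb' => ?_⟩
  · change canonicalWeight f (n + 1) β x ≠ 0 ↔ _
    rw [canonicalWeight_ne_zero_iff hf n.succ_ne_zero]
    by_cases hx : x.1 = 0 <;> simp [pathSections, hx]
    omega
  · rcases eq_or_ne t 0 with rfl | ht
    · rfl
    · simp only [pathSections, if_pos (⟨ht, htn⟩ : t ≠ 0 ∧ t ≤ n), Set.mem_singleton_iff]
        at hb hb'
      rw [hb, hb']

theorem setOf_isBR_chBelief_eq {w : A → B → ℝ} {α : ℕ → A} {β : ℕ → B}
    (hα : IsStrictBestReplyPath w f β α) (hf : ∀ n, 0 < f n) (n : ℕ) :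
    {a | ∃ μ : Belief B, memDelta f (n + 1) μ ∧ CHBelief (pathSections β n) n μ ∧
      isBR w (n + 1) μ a} = {α (n + 1)} := by
  refine Set.ext fun a => ⟨fun ⟨μ, hμ, hCH, hbr⟩ => ?_, ?_⟩
  · refine hα.eq_of_isBR hf n.succ_ne_zero hμ
      (fun s b hs hsn hb => not_not.1 fun hne => hb ?_) hbr
    simpa [pathSections, hs, Nat.lt_succ_iff.1 hsn] using ((hCH.1 (s, b)).1 hne).2
  · rintro rfl
    exact ⟨_, canonicalBelief_memDelta hf _ β, chBelief_canonicalBelief hf β n,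
      hα.isBR_canonicalBelief hf _⟩

variable [Fintype A] [Nonempty A] {w1 : A → B → ℝ} {w2 : B → A → ℝ} {α : ℕ → A} {β : ℕ → B}

theorem sigmaProc_survivorsAlong (hα : IsStrictBestReplyPath w1 f β α)
    (hβ : IsStrictBestReplyPath w2 f α β) (hf : ∀ n, 0 < f n) :
    ∀ n, SurvivorsAlong (SigmaProc w1 w2 f n).1 α n ∧ SurvivorsAlong (SigmaProc w1 w2 f n).2 β n
  | 0 => ⟨⟨fun _ => trivial, fun _ => trivial, fun _ _ ht h0 _ => absurd (Nat.le_zero.1 h0) ht⟩,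
      ⟨fun _ => trivial, fun _ => trivial, fun _ _ ht h0 _ => absurd (Nat.le_zero.1 h0) ht⟩⟩
  | n + 1 =>
    have ih := sigmaProc_survivorsAlong hα hβ hf n
    ⟨ih.1.step ih.2 hα hf, ih.2.step ih.1 hβ hf⟩

theorem chProc_eq (hα : IsStrictBestReplyPath w1 f β α) (hβ : IsStrictBestReplyPath w2 f α β)
    (hf : ∀ n, 0 < f n) : ∀ n, CHProc w1 w2 f n = (pathSections α n, pathSections β n)
  | 0 => by
    simp only [CHProc, Prod.mk.injEq]
    constructor <;> funext k <;> simp [pathSections]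
  | n + 1 => by
    rw [CHProc, chProc_eq hα hβ hf n]
    simp only [setOf_isBR_chBelief_eq hα hf n, setOf_isBR_chBelief_eq hβ hf n]
    exact Prod.ext (funext fun k => (pathSections_succ α n k).symm)
      (funext fun k => (pathSections_succ β n k).symm)

end Procedures

section Genericity

theorem exists_injective_real (α : Type*) [Countable α] : ∃ r : α → ℝ, Injective r :=
  let ⟨_, hg⟩ := exists_injective_nat α
  ⟨_, Nat.cast_injective.comp hg⟩

theorem countable_setOf_not_injective_add_smul [Countable A] (g : A → ℝ) {r : A → ℝ}
    (hr : Injective r) : {δ : ℝ | ¬Injective (g + δ • r)}.Countable := by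
  refine (Set.countable_iUnion fun a => Set.countable_iUnion fun a' =>
    Set.Subsingleton.countable (s := {δ : ℝ | a ≠ a' ∧ g a + δ * r a = g a' + δ * r a'})
      fun δ hδ δ' hδ' => ?_).mono fun δ hδ => ?_
  · have hne : r a - r a' ≠ 0 := sub_ne_zero.2 (hr.ne hδ.1)
    exact mul_right_cancel₀ hne (by linarith [hδ.2, hδ'.2])
  · simp only [Injective, not_forall] at hδ
    obtain ⟨a, a', heq, hne⟩ := hδ
    exact Set.mem_iUnion₂.2 ⟨a, a', hne, by simpa using heq⟩

variable [Fintype B] [Nonempty B] {f : ℕ → ℝ}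

theorem canonicalPayoff_add_mul (hf : ∀ n, 0 < f n) {k : ℕ} (hk : k ≠ 0) (v : A → B → ℝ)
    (δ : ℝ) (r : A → ℝ) (β : ℕ → B) :
    canonicalPayoff (fun a b => v a b + δ * r a) f k β = canonicalPayoff v f k β + δ • r := by
  funext a
  have hlevel : ∀ s, (if s = 0 then (∑ b, (v a b + δ * r a)) / Fintype.card B
      else v a (β s) + δ * r a) =
      (if s = 0 then (∑ b, v a b) / Fintype.card B else v a (β s)) + δ * r a := fun s => by
    split_ifs
    · rw [sum_add_distrib, sum_const, card_univ, nsmul_eq_mul, add_div,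
        mul_div_cancel_left₀ _ (by positivity : (Fintype.card B : ℝ) ≠ 0)]
    · rfl
  rw [Pi.add_apply, Pi.smul_apply, smul_eq_mul, canonicalPayoff, canonicalPayoff,
    sum_congr rfl fun s _ => by rw [hlevel, mul_add], sum_add_distrib, ← sum_mul,
    sum_fnorm hf hk, one_mul]

theorem finite_range_canonicalPayoff (w : A → B → ℝ) (f : ℕ → ℝ) (k : ℕ) :
    (Set.range (canonicalPayoff w f k)).Finite := by
  refine (Set.finite_range fun γ : Fin k → B => canonicalPayoff w f k
    fun s => if h : s < k then γ ⟨s, h⟩ else Classical.arbitrary B).subset ?_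
  rintro _ ⟨β, rfl⟩
  exact ⟨fun i => β i, canonicalPayoff_congr w f k fun s hs => dif_pos hs⟩

theorem countable_setOf_not_injective_canonicalPayoff [Fintype A] (hf : ∀ n, 0 < f n)
    (v : A → B → ℝ) {r : A → ℝ} (hr : Injective r) :
    {δ : ℝ | ∃ k, k ≠ 0 ∧ ∃ β : ℕ → B,
      ¬Injective (canonicalPayoff (fun a b => v a b + δ * r a) f k β)}.Countable := by
  refine (Set.countable_iUnion fun k => (finite_range_canonicalPayoff v f k).countable.biUnion
    fun g _ => countable_setOf_not_injective_add_smul g hr).mono ?_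
  rintro δ ⟨k, hk, β, hδ⟩
  rw [canonicalPayoff_add_mul hf hk] at hδ
  simp only [Set.mem_iUnion]
  exact ⟨k, _, ⟨β, rfl⟩, hδ⟩

theorem exists_injective_canonicalPayoff_add_mul [Fintype A] [Nonempty A] (hf : ∀ n, 0 < f n)
    (v1 : A → B → ℝ) (v2 : B → A → ℝ) {r : A → ℝ} {q : B → ℝ} (hr : Injective r)
    (hq : Injective q) {η : ℝ} (hη : 0 < η) :
    ∃ δ ∈ Set.Ioo 0 η,
      (∀ k, k ≠ 0 → ∀ β, Injective (canonicalPayoff (fun a b => v1 a b + δ * r a) f k β)) ∧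
      (∀ k, k ≠ 0 → ∀ α, Injective (canonicalPayoff (fun b a => v2 b a + δ * q b) f k α)) := by
  obtain ⟨δ, hδ, hδη⟩ := (((countable_setOf_not_injective_canonicalPayoff hf v1 hr).union
    (countable_setOf_not_injective_canonicalPayoff hf v2 hq)).dense_compl ℝ).exists_between hη
  exact ⟨δ, hδη, fun k hk β => by_contra fun h => hδ (Or.inl ⟨k, hk, β, h⟩),
    fun k hk α => by_contra fun h => hδ (Or.inr ⟨k, hk, α, h⟩)⟩

end Genericity

section BestReplyPath

variable [Fintype A] [Fintype B] [Nonempty A] [Nonempty B]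

-- The guard `s < k` is only there for termination: `canonicalPayoff _ _ k` reads levels `< k`.
noncomputable def bestReplyPath (w1 : A → B → ℝ) (w2 : B → A → ℝ) (f : ℕ → ℝ) : ℕ → A × B
  | k =>
    ((Finite.exists_max (canonicalPayoff w1 f k fun s =>
        if _ : s < k then (bestReplyPath w1 w2 f s).2 else Classical.arbitrary B)).choose,
     (Finite.exists_max (canonicalPayoff w2 f k fun s =>
        if _ : s < k then (bestReplyPath w1 w2 f s).1 else Classical.arbitrary A)).choose)
  decreasing_by all_goals assumption

theorem bestReplyPath_fst_isMax (w1 : A → B → ℝ) (w2 : B → A → ℝ) (f : ℕ → ℝ) (k : ℕ)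
    (a : A) :
    canonicalPayoff w1 f k (fun s => (bestReplyPath w1 w2 f s).2) a ≤
      canonicalPayoff w1 f k (fun s => (bestReplyPath w1 w2 f s).2)
        (bestReplyPath w1 w2 f k).1 := by
  rw [canonicalPayoff_congr w1 f k (β' := fun s =>
      if _ : s < k then (bestReplyPath w1 w2 f s).2 else Classical.arbitrary B)
      fun s hs => by rw [dif_pos hs],
    bestReplyPath.eq_1 w1 w2 f k]
  exact (Finite.exists_max _).choose_spec a

theorem bestReplyPath_snd_isMax (w1 : A → B → ℝ) (w2 : B → A → ℝ) (f : ℕ → ℝ) (k : ℕ)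
    (b : B) :
    canonicalPayoff w2 f k (fun s => (bestReplyPath w1 w2 f s).1) b ≤
      canonicalPayoff w2 f k (fun s => (bestReplyPath w1 w2 f s).1)
        (bestReplyPath w1 w2 f k).2 := by
  rw [canonicalPayoff_congr w2 f k (β' := fun s =>
      if _ : s < k then (bestReplyPath w1 w2 f s).1 else Classical.arbitrary A)
      fun s hs => by rw [dif_pos hs],
    bestReplyPath.eq_1 w1 w2 f k]
  exact (Finite.exists_max _).choose_spec b

theorem exists_isStrictBestReplyPath {w1 : A → B → ℝ} {w2 : B → A → ℝ} {f : ℕ → ℝ}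
    (hw1 : ∀ k, k ≠ 0 → ∀ β, Injective (canonicalPayoff w1 f k β))
    (hw2 : ∀ k, k ≠ 0 → ∀ α, Injective (canonicalPayoff w2 f k α)) :
    ∃ α β, IsStrictBestReplyPath w1 f β α ∧ IsStrictBestReplyPath w2 f α β :=
  ⟨fun k => (bestReplyPath w1 w2 f k).1, fun k => (bestReplyPath w1 w2 f k).2,
    fun k hk a ha => (bestReplyPath_fst_isMax w1 w2 f k a).lt_of_ne ((hw1 k hk _).ne ha),
    fun k hk b hb => (bestReplyPath_snd_isMax w1 w2 f k b).lt_of_ne ((hw2 k hk _).ne hb)⟩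

end BestReplyPath

end

theorem generic_games_dense_general {A B : Type*} [Fintype A] [Fintype B] [Nonempty A] [Nonempty B]
    (f : ℕ → ℝ) (hf : ∀ n, 0 < f n)
    (v1 : A → B → ℝ) (v2 : B → A → ℝ) (ε : ℝ) (hε : 0 < ε) :
    ∃ (w1 : A → B → ℝ) (w2 : B → A → ℝ),
      (∑ x : A × B, (|v1 x.1 x.2 - w1 x.1 x.2| + |v2 x.2 x.1 - w2 x.2 x.1|)) < ε ∧
      (∀ k : ℕ, 1 ≤ k →
        (∃ a : A, SigmaSec1 w1 w2 f k k = {a}) ∧ (∃ b : B, SigmaSec2 w1 w2 f k k = {b})) ∧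
      (∀ k : ℕ,
        CHSec1 w1 w2 f k k = SigmaSec1 w1 w2 f k k ∧
        CHSec2 w1 w2 f k k = SigmaSec2 w1 w2 f k k) := by
  obtain ⟨r, hr⟩ := exists_injective_real A
  obtain ⟨q, hq⟩ := exists_injective_real B
  set C : ℝ := ∑ x : A × B, (|r x.1| + |q x.2|)
  have hC : 0 ≤ C := sum_nonneg fun _ _ => by positivity
  obtain ⟨δ, ⟨hδ0, hδε⟩, hw1, hw2⟩ := exists_injective_canonicalPayoff_add_mul hf v1 v2 hr hq
    (div_pos hε (by linarith : 0 < C + 1))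
  obtain ⟨α, β, hα, hβ⟩ := exists_isStrictBestReplyPath hw1 hw2
  have hsigma := sigmaProc_survivorsAlong hα hβ hf
  have hch := chProc_eq hα hβ hf
  refine ⟨fun a b => v1 a b + δ * r a, fun b a => v2 b a + δ * q b, ?_,
    fun k hk => ⟨⟨α k, ?_⟩, ⟨β k, ?_⟩⟩, fun k => ⟨?_, ?_⟩⟩
  · calc _ = δ * C := by simp [C, abs_mul, abs_of_pos hδ0, mul_sum, mul_add]
      _ < ε := by nlinarith [(lt_div_iff₀ (by linarith : 0 < C + 1)).1 hδε]
  · rw [← pathSections_self α (by omega : k ≠ 0)]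
    exact (hsigma k).1.setOf_eq_pathSections le_rfl
  · rw [← pathSections_self β (by omega : k ≠ 0)]
    exact (hsigma k).2.setOf_eq_pathSections le_rfl
  · rw [CHSec1, hch]
    exact ((hsigma k).1.setOf_eq_pathSections le_rfl).symm
  · rw [CHSec2, hch]
    exact ((hsigma k).2.setOf_eq_pathSections le_rfl).symm

/-- density of generic games: every game can be ε-perturbed into a game in
which all step-k survivor sets of the Δ^κ-rationalization procedure for level-k types
(k ≥ 1) are singletons, and hence the CH- and Δ^κ-procedures coincide. -/
theorem generic_games_dense {A B : Type*} [Fintype A] [Fintype B] [Nonempty A] [Nonempty B]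
    (f : ℕ → ℝ) (hf : ∀ n, 0 < f n) (hfsum : HasSum f 1)
    (v1 : A → B → ℝ) (v2 : B → A → ℝ) (ε : ℝ) (hε : 0 < ε) :
    ∃ (w1 : A → B → ℝ) (w2 : B → A → ℝ),
      (∑ x : A × B, (|v1 x.1 x.2 - w1 x.1 x.2| + |v2 x.2 x.1 - w2 x.2 x.1|)) < ε ∧
      (∀ k : ℕ, 1 ≤ k →
        (∃ a : A, SigmaSec1 w1 w2 f k k = {a}) ∧ (∃ b : B, SigmaSec2 w1 w2 f k k = {b})) ∧
      (∀ k : ℕ,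
        CHSec1 w1 w2 f k k = SigmaSec1 w1 w2 f k k ∧
        CHSec2 w1 w2 f k k = SigmaSec2 w1 w2 f k k) :=
  generic_games_dense_general f hf v1 v2 ε hε
end
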